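/- Let F be the cumulative distribution function of a discrete random variable Y taking values in ℕ, and let U ~ Uniform(0,1) be independent of Y. Define the randomized quantile residual transform V = F(Y−1) + U·(F(Y) − F(Y−1)) (with F(−1) = 0). Then V is uniformly distributed on (0,1). -/

import Mathlib

/-!
Conditionally on `Y = n`, the residual `V` is uniform on `(F(n-1), F(n))`, and this happens with
probability `F(n) - F(n-1)`. Hence the law of `V` is Lebesgue measure restricted to the disjoint
union of the intervals `(F(n-1), F(n))`, which fills `(0,1)` up to the countably many endpoints.
-/

open MeasureTheory ProbabilityTheory Set Filter Topology Function

theorem ProbabilityTheory.IndepFun.map_eq_sum_smul_map {Ω ι β γ : Type*} [MeasurableSpace Ω]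
    [MeasurableSpace ι] [MeasurableSpace β] [MeasurableSpace γ] [Countable ι]
    [MeasurableSingletonClass ι] {μ : Measure Ω} {X : Ω → ι} {U : Ω → β}
    (hX : Measurable X) (hU : Measurable U) (hXU : IndepFun X U μ) {G : ι → β → γ}
    (hG : ∀ i, Measurable (G i)) :
    μ.map (fun ω => G (X ω) (U ω)) =
      Measure.sum fun i => μ (X ⁻¹' {i}) • (μ.map U).map (G i) := by
  have hGXU : Measurable fun ω => G (X ω) (U ω) :=
    (measurable_from_prod_countable_right (f := fun p : ι × β => G p.1 p.2) hG).comp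
      (hX.prodMk hU)
  ext s hs
  have hdecomp :
      (fun ω => G (X ω) (U ω)) ⁻¹' s = ⋃ i, X ⁻¹' {i} ∩ U ⁻¹' (G i ⁻¹' s) := by
    ext ω; simp
  have hdisj : Pairwise (Disjoint on fun i => X ⁻¹' {i} ∩ U ⁻¹' (G i ⁻¹' s)) :=
    fun i j hij => ((disjoint_singleton.2 hij).preimage X).mono inter_subset_left inter_subset_left
  rw [Measure.map_apply hGXU hs, hdecomp, measure_iUnion hdisj
    fun i => (hX (measurableSet_singleton i)).inter (hU (hG i hs)), Measure.sum_apply _ hs]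
  congr 1 with i
  rw [hXU.measure_inter_preimage_eq_mul _ _ (measurableSet_singleton i) (hG i hs),
    Measure.smul_apply, Measure.map_apply (hG i) hs, Measure.map_apply hU (hG i hs), smul_eq_mul]

theorem Ioo_diff_iUnion_Ioo_succ_subset_range {a : ℕ → ℝ} {l : ℝ}
    (hl : Tendsto a atTop (𝓝 l)) :
    Ioo (a 0) l \ ⋃ n, Ioo (a n) (a (n + 1)) ⊆ range a := by
  rintro x ⟨⟨h0, hxl⟩, hgap⟩
  by_contra hx
  simp only [mem_iUnion, mem_Ioo, not_exists, not_and, not_lt] at hgap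
  have hbelow : ∀ n, a n < x := by
    intro n
    induction n with
    | zero => exact h0
    | succ n ih => exact (hgap n ih).lt_of_ne fun h => hx ⟨n + 1, h⟩
  obtain ⟨n, hn⟩ := (hl.eventually (lt_mem_nhds hxl)).exists
  exact (hbelow n).not_gt hn

theorem Monotone.iUnion_Ioo_succ_ae_eq_Ioo {μ : Measure ℝ} [NullSingletonClass μ]
    {a : ℕ → ℝ} (ha : Monotone a) {l : ℝ} (hl : Tendsto a atTop (𝓝 l)) :
    (⋃ n, Ioo (a n) (a (n + 1))) =ᵐ[μ] Ioo (a 0) l := by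
  refine (LE.le.eventuallyLE ?_).antisymm ?_
  · exact iUnion_subset fun n => Ioo_subset_Ioo (ha (Nat.zero_le n)) (ha.ge_of_tendsto hl _)
  · exact ae_le_set.2 (measure_mono_null (Ioo_diff_iUnion_Ioo_succ_subset_range hl)
      ((countable_range a).measure_zero μ))

theorem Monotone.sum_restrict_Ioo_succ {μ : Measure ℝ} [NullSingletonClass μ] {a : ℕ → ℝ}
    (ha : Monotone a) {l : ℝ} (hl : Tendsto a atTop (𝓝 l)) :
    Measure.sum (fun n => μ.restrict (Ioo (a n) (a (n + 1)))) = μ.restrict (Ioo (a 0) l) := by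
  have hdisj : Pairwise (Disjoint on fun n => Ioo (a n) (a (n + 1))) := by
    simpa only [Order.succ_eq_add_one] using ha.pairwise_disjoint_on_Ioo_succ
  rw [← Measure.restrict_iUnion hdisj fun _ => measurableSet_Ioo,
    Measure.restrict_congr_set (ha.iUnion_Ioo_succ_ae_eq_Ioo hl)]

theorem Real.smul_map_volume_affine {a c : ℝ} (hc : c ≠ 0) :
    ENNReal.ofReal |c| • Measure.map (fun u => a + u * c) volume = volume := by
  have : (fun u => a + u * c) = (a + ·) ∘ (· * c) := rfl
  rw [this, ← Measure.map_map (measurable_const_add a) (measurable_mul_const c),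
    ← Measure.map_smul, Real.smul_map_volume_mul_right hc, map_add_left_eq_self]

theorem Real.smul_map_restrict_Ioo_zero_one_affine {a b : ℝ} (hab : a ≤ b) :
    ENNReal.ofReal (b - a) • (volume.restrict (Ioo 0 1)).map (fun u => a + u * (b - a)) =
      volume.restrict (Ioo a b) := by
  rcases hab.eq_or_lt with rfl | hlt
  · simp
  have hba : 0 < b - a := sub_pos.2 hlt
  have hpre : (fun u => a + u * (b - a)) ⁻¹' Ioo a b = Ioo 0 1 := by
    ext u
    simp only [mem_preimage, mem_Ioo, lt_add_iff_pos_right, mul_pos_iff_of_pos_right hba]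
    rw [← lt_sub_iff_add_lt', mul_lt_iff_lt_one_left hba]
  have hf : Measurable fun u : ℝ => a + u * (b - a) := by fun_prop
  rw [← hpre, ← Measure.restrict_map hf measurableSet_Ioo, ← Measure.restrict_smul]
  nth_rw 1 [← abs_of_pos hba]
  rw [Real.smul_map_volume_affine hba.ne']

section NatValued

variable {Ω : Type*} [MeasurableSpace Ω] {μ : Measure Ω} {Y : Ω → ℕ}

theorem measure_lt_add_one_eq (hY : Measurable Y) (n : ℕ) :
    μ {ω | Y ω < n + 1} = μ {ω | Y ω < n} + μ (Y ⁻¹' {n}) := by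
  have hsplit : {ω | Y ω < n + 1} = {ω | Y ω < n} ∪ Y ⁻¹' {n} := by
    ext ω; simp [le_iff_lt_or_eq]
  rw [hsplit, measure_union _ (hY (measurableSet_singleton n))]
  exact disjoint_left.2 fun ω h1 h2 => (show Y ω < n from h1).ne h2

theorem measure_preimage_singleton_eq_ofReal_sub [IsFiniteMeasure μ] (hY : Measurable Y)
    (n : ℕ) :
    μ (Y ⁻¹' {n}) =
      ENNReal.ofReal ((μ {ω | Y ω < n + 1}).toReal - (μ {ω | Y ω < n}).toReal) := by
  rw [measure_lt_add_one_eq hY, ENNReal.toReal_add (measure_ne_top _ _) (measure_ne_top _ _),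
    add_sub_cancel_left, ENNReal.ofReal_toReal (measure_ne_top _ _)]

theorem tendsto_measure_lt_toReal [IsFiniteMeasure μ] :
    Tendsto (fun n : ℕ => (μ {ω | Y ω < n}).toReal) atTop (𝓝 (μ univ).toReal) := by
  have hunion : (⋃ n : ℕ, {ω | Y ω < n}) = univ :=
    eq_univ_of_forall fun ω => mem_iUnion.2 ⟨Y ω + 1, Nat.lt_succ_self _⟩
  have h := tendsto_measure_iUnion_atTop (μ := μ) (s := fun n : ℕ => {ω | Y ω < n})
    fun m n hmn ω h => lt_of_lt_of_le h hmn
  rw [hunion] at h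
  exact (ENNReal.tendsto_toReal (measure_ne_top μ univ)).comp h

end NatValued

/-- Randomized quantile residual transform (Dunn–Smyth): let `Y` be an `ℕ`-valued
random variable with cdf `F` (so `F(Y-1)` is the probability of a strictly smaller
value, with `F(-1) = 0`), and let `U ~ Uniform(0,1)` be independent of `Y`. Then
`V = F(Y-1) + U · (F(Y) - F(Y-1))` is uniformly distributed on `(0,1)`. -/
theorem randomized_quantile_residual_uniform
    {Ω : Type*} [MeasureSpace Ω] [IsProbabilityMeasure (ℙ : Measure Ω)]
    (Y : Ω → ℕ) (U : Ω → ℝ) (hY : Measurable Y) (hU : Measurable U)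
    (hUnif : Measure.map U ℙ = volume.restrict (Set.Ioo (0 : ℝ) 1))
    (hindep : IndepFun Y U ℙ)
    (F Fm : ℕ → ℝ)
    (hF : ∀ m, F m = (ℙ {ω | Y ω ≤ m}).toReal)
    (hFm : ∀ m, Fm m = (ℙ {ω | Y ω < m}).toReal)
    (V : Ω → ℝ)
    (hV : ∀ ω, V ω = Fm (Y ω) + U ω * (F (Y ω) - Fm (Y ω))) :
    Measure.map V ℙ = volume.restrict (Set.Ioo (0 : ℝ) 1) := by
  have hFsucc : ∀ n, F n = Fm (n + 1) := by
    intro n; simp only [hF, hFm, Nat.lt_succ_iff]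
  have hVG : V = fun ω => Fm (Y ω) + U ω * (Fm (Y ω + 1) - Fm (Y ω)) := by
    ext ω; rw [hV, hFsucc]
  have hmono : Monotone Fm := fun m n hmn => by
    simp only [hFm]
    exact ENNReal.toReal_mono (measure_ne_top _ _) (measure_mono fun ω h => lt_of_lt_of_le h hmn)
  have hlim : Tendsto Fm atTop (𝓝 1) := by
    simpa only [← funext hFm, measure_univ, ENNReal.toReal_one] using
      tendsto_measure_lt_toReal (μ := ℙ) (Y := Y)
  have hFm0 : Fm 0 = 0 := by simp [hFm]
  have hmass : ∀ n, ℙ (Y ⁻¹' {n}) = ENNReal.ofReal (Fm (n + 1) - Fm n) := by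
    intro n; rw [measure_preimage_singleton_eq_ofReal_sub hY, hFm, hFm]
  calc Measure.map V ℙ
      = Measure.sum fun n => ENNReal.ofReal (Fm (n + 1) - Fm n) •
          (volume.restrict (Ioo 0 1)).map fun u => Fm n + u * (Fm (n + 1) - Fm n) := by
        rw [hVG, hindep.map_eq_sum_smul_map hY hU (G := fun n u => Fm n + u * (Fm (n + 1) - Fm n))
          fun n => by fun_prop, hUnif]
        simp only [hmass]
    _ = Measure.sum fun n => volume.restrict (Ioo (Fm n) (Fm (n + 1))) := by
        simp only [Real.smul_map_restrict_Ioo_zero_one_affine (hmono (Nat.le_succ _))]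
    _ = volume.restrict (Ioo 0 1) := by
        rw [hmono.sum_restrict_Ioo_succ hlim, hFm0]
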